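/- (Correctness of the double-sided (u,u+v) decoder.) Let t ≥ 1, n = 2^t, and y = (y₁, y₂) ∈ ℝ^{2n}. Suppose x = (x₁, x₂) ∈ BW_{2n} satisfies ‖y − x‖² < d(BW_{2n})/4. Then: (a) x is the unique point of BW_{2n} with ‖y − x‖² < d(BW_{2n})/4 (in particular it is the closest point of BW_{2n} to y); and (b) there exists i ∈ {1,2} such that x_i is the unique point u of BW_n with ‖y_i − u‖² < d(BW_n)/4, and the difference of the other half, x_{3−i} − x_i, is the unique point v of RBW_n with ‖(y_{3−i} − x_i) − v‖² < d(RBW_n)/4. Hence x is recovered by nearest-point decoding of one half in BW_n followed by nearest-point decoding of the corrected other half in RBW_n. -/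

import Mathlib

open Matrix

noncomputable section

/-- `Rmat n` is the `n × n` matrix `I_{n/2} ⊗ R(2)`, block diagonal with
`2 × 2` blocks `[[1, 1], [1, -1]]`, acting on row vectors on the right. -/
def Rmat (n : ℕ) : Matrix (Fin n) (Fin n) ℝ :=
  Matrix.of fun i j =>
    if (i : ℕ) / 2 = (j : ℕ) / 2 then
      if (i : ℕ) % 2 = 1 ∧ (j : ℕ) % 2 = 1 then -1 else 1
    else 0

/-- Concatenation `(u, v)` of two `2^t`-dimensional vectors into a
`2^(t+1)`-dimensional vector. -/
def concat {t : ℕ} (u v : Fin (2 ^ t) → ℝ) : Fin (2 ^ (t + 1)) → ℝ := fun i =>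
  if h : (i : ℕ) < 2 ^ t then u ⟨i, h⟩
  else v ⟨(i : ℕ) - 2 ^ t, by
    have hi := i.isLt
    have h2 : 2 ^ (t + 1) = 2 ^ t + 2 ^ t := by rw [pow_succ]; ring
    omega⟩

/-- The Barnes–Wall lattices `BW_{2^t} ⊆ ℝ^{2^t}`, defined recursively by
`BW_2 = ℤ²` and `BW_{2n} = {(u, u + v) : u ∈ BW_n, v ∈ BW_n · R(n)}`. -/
def BW : ∀ t : ℕ, Set (Fin (2 ^ t) → ℝ)
  | 0 => {x | ∀ i, ∃ z : ℤ, x i = (z : ℝ)}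
  | (t + 1) =>
    {x | ∃ u v : Fin (2 ^ t) → ℝ, u ∈ BW t ∧
      (∃ w ∈ BW t, v = Matrix.vecMul w (Rmat (2 ^ t))) ∧ x = concat u (u + v)}

/-- `RBW_n = {x · R(n) : x ∈ BW_n}`. -/
def RBW (t : ℕ) : Set (Fin (2 ^ t) → ℝ) :=
  (fun x => Matrix.vecMul x (Rmat (2 ^ t))) '' BW t

/-- Squared Euclidean norm. -/
def sqnorm {m : ℕ} (x : Fin m → ℝ) : ℝ := ∑ i, x i ^ 2

/-- `minDist Λ` is the minimum of `‖x‖²` over nonzero `x ∈ Λ`. -/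
def minDist {m : ℕ} (Λ : Set (Fin m → ℝ)) : ℝ :=
  sInf (sqnorm '' {x ∈ Λ | x ≠ 0})

/-!
Write `x = (x₁, x₂)` with `x₁ ∈ BW_n` and `x₂ - x₁ ∈ RBW_n`. Since `R · BW_n ⊆ BW_n`, also
`x₂ ∈ BW_n`, and the lattice points `(u, u)` and `(0, v)` of `BW_{2n}` give
`d(BW_{2n}) ≤ 2 d(BW_n)` and `d(BW_{2n}) ≤ d(RBW_n)`. The error splits as
`‖y₁ - x₁‖² + ‖y₂ - x₂‖² < d(BW_{2n})/4`, so one half has error below `d(BW_n)/4` and both have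
error below `d(RBW_n)/4`. Finally, two lattice points within squared distance `d/4` of `y` differ
by a lattice vector of squared norm `< d`, hence coincide.
-/

section Halves

variable {t : ℕ}

def leftIdx (i : Fin (2 ^ t)) : Fin (2 ^ (t + 1)) :=
  Fin.cast (Nat.two_pow_succ t).symm (Fin.castAdd _ i)

def rightIdx (i : Fin (2 ^ t)) : Fin (2 ^ (t + 1)) :=
  Fin.cast (Nat.two_pow_succ t).symm (Fin.natAdd _ i)

@[simp] lemma val_leftIdx (i : Fin (2 ^ t)) : (leftIdx i : ℕ) = i := rfl

@[simp] lemma val_rightIdx (i : Fin (2 ^ t)) : (rightIdx i : ℕ) = 2 ^ t + i := rfl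

lemma sum_univ_two_pow_succ {M : Type*} [AddCommMonoid M] (f : Fin (2 ^ (t + 1)) → M) :
    ∑ i, f i = ∑ i, f (leftIdx i) + ∑ i, f (rightIdx i) := by
  rw [← Fin.sum_congr' f (Nat.two_pow_succ t).symm, Fin.sum_univ_add]
  rfl

lemma funext_halves {α : Type*} {f g : Fin (2 ^ (t + 1)) → α}
    (hl : ∀ i, f (leftIdx i) = g (leftIdx i)) (hr : ∀ i, f (rightIdx i) = g (rightIdx i)) :
    f = g := by
  funext j
  obtain ⟨j, rfl⟩ := (finCongr (Nat.two_pow_succ t).symm).surjective j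
  induction j using Fin.addCases with
  | left i => exact hl i
  | right i => exact hr i

@[simp] lemma concat_leftIdx (u v : Fin (2 ^ t) → ℝ) (i : Fin (2 ^ t)) :
    concat u v (leftIdx i) = u i := by
  simp [concat]

@[simp] lemma concat_rightIdx (u v : Fin (2 ^ t) → ℝ) (i : Fin (2 ^ t)) :
    concat u v (rightIdx i) = v i := by
  simp [concat]

lemma concat_inj {u v u' v' : Fin (2 ^ t) → ℝ} :
    concat u v = concat u' v' ↔ u = u' ∧ v = v' := by
  refine ⟨fun h => ⟨funext fun i => ?_, funext fun i => ?_⟩, fun ⟨hu, hv⟩ => hu ▸ hv ▸ rfl⟩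
  · simpa using congrFun h (leftIdx i)
  · simpa using congrFun h (rightIdx i)

lemma concat_sub (u v u' v' : Fin (2 ^ t) → ℝ) :
    concat u v - concat u' v' = concat (u - u') (v - v') :=
  funext_halves (by simp) (by simp)

@[simp] lemma concat_zero : concat (0 : Fin (2 ^ t) → ℝ) 0 = 0 :=
  funext_halves (by simp) (by simp)

lemma sqnorm_concat (u v : Fin (2 ^ t) → ℝ) :
    sqnorm (concat u v) = sqnorm u + sqnorm v := by
  simp [sqnorm, sum_univ_two_pow_succ (fun i => concat u v i ^ 2)]

end Halves

section MinDist

variable {m : ℕ}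

lemma sqnorm_nonneg (x : Fin m → ℝ) : 0 ≤ sqnorm x :=
  Finset.sum_nonneg fun i _ => sq_nonneg (x i)

@[simp] lemma sqnorm_zero : sqnorm (0 : Fin m → ℝ) = 0 := by simp [sqnorm]

lemma sqnorm_sub_le (y a b : Fin m → ℝ) :
    sqnorm (a - b) ≤ 2 * sqnorm (y - a) + 2 * sqnorm (y - b) := by
  simp only [sqnorm, Finset.mul_sum, ← Finset.sum_add_distrib, Pi.sub_apply]
  gcongr with i
  nlinarith [sq_nonneg (y i - a i + (y i - b i))]

lemma minDist_le_sqnorm {Λ : Set (Fin m → ℝ)} {x : Fin m → ℝ} (hx : x ∈ Λ) (hx₀ : x ≠ 0) :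
    minDist Λ ≤ sqnorm x :=
  csInf_le ⟨0, by rintro _ ⟨z, -, rfl⟩; exact sqnorm_nonneg z⟩ ⟨x, ⟨hx, hx₀⟩, rfl⟩

lemma le_minDist {Λ : Set (Fin m → ℝ)} {c : ℝ} (hΛ : ∃ x ∈ Λ, x ≠ 0)
    (hc : ∀ x ∈ Λ, x ≠ 0 → c ≤ sqnorm x) : c ≤ minDist Λ := by
  obtain ⟨x, hx, hx₀⟩ := hΛ
  exact le_csInf ⟨_, x, ⟨hx, hx₀⟩, rfl⟩ (by rintro _ ⟨z, ⟨hz, hz₀⟩, rfl⟩; exact hc z hz hz₀)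

lemma eq_of_sqnorm_sub_lt_minDist (Λ : AddSubgroup (Fin m → ℝ)) {y a b : Fin m → ℝ}
    (ha : a ∈ Λ) (hb : b ∈ Λ) (hya : sqnorm (y - a) < minDist (Λ : Set (Fin m → ℝ)) / 4)
    (hyb : sqnorm (y - b) < minDist (Λ : Set (Fin m → ℝ)) / 4) : a = b := by
  by_contra hab
  have := minDist_le_sqnorm (Λ.sub_mem ha hb) (sub_ne_zero.mpr hab)
  linarith [sqnorm_sub_le y a b]

lemma mem_and_sqnorm_sub_lt_minDist_iff (Λ : AddSubgroup (Fin m → ℝ)) {y x : Fin m → ℝ}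
    (hx : x ∈ Λ) (hyx : sqnorm (y - x) < minDist (Λ : Set (Fin m → ℝ)) / 4) (u : Fin m → ℝ) :
    (u ∈ Λ ∧ sqnorm (y - u) < minDist (Λ : Set (Fin m → ℝ)) / 4) ↔ u = x :=
  ⟨fun ⟨hu, hyu⟩ => eq_of_sqnorm_sub_lt_minDist Λ hu hx hyu hyx, fun h => h ▸ ⟨hx, hyx⟩⟩

end MinDist

section Rmat

variable {t : ℕ}

lemma Rmat_one : Rmat 1 = 1 := by
  ext i j
  fin_cases i; fin_cases j
  simp [Rmat]

lemma Rmat_leftIdx_leftIdx (i j : Fin (2 ^ t)) :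
    Rmat (2 ^ (t + 1)) (leftIdx i) (leftIdx j) = Rmat (2 ^ t) i j := rfl

lemma Rmat_two_pow_succ_blocks (ht : t ≠ 0) (i j : Fin (2 ^ t)) :
    Rmat (2 ^ (t + 1)) (rightIdx i) (rightIdx j) = Rmat (2 ^ t) i j ∧
    Rmat (2 ^ (t + 1)) (leftIdx i) (rightIdx j) = 0 ∧
    Rmat (2 ^ (t + 1)) (rightIdx i) (leftIdx j) = 0 := by
  -- `2 ^ t` is even, so no `2 × 2` block of `R` straddles the two halves.
  obtain ⟨k, hk⟩ : Even (2 ^ t) := (Nat.even_pow' ht).mpr even_two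
  simp only [Rmat, Matrix.of_apply, val_leftIdx, val_rightIdx, hk]
  refine ⟨?_, ?_, ?_⟩ <;> split_ifs <;> first | rfl | omega

lemma vecMul_Rmat_concat (ht : t ≠ 0) (u w : Fin (2 ^ t) → ℝ) :
    concat u w ᵥ* Rmat (2 ^ (t + 1)) = concat (u ᵥ* Rmat (2 ^ t)) (w ᵥ* Rmat (2 ^ t)) := by
  refine funext_halves (fun j => ?_) (fun j => ?_) <;>
    simp [vecMul, dotProduct, sum_univ_two_pow_succ, Rmat_leftIdx_leftIdx,
      Rmat_two_pow_succ_blocks ht]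

lemma vecMul_Rmat_two_concat (u w : Fin (2 ^ 0) → ℝ) :
    concat u w ᵥ* Rmat (2 ^ 1) = concat (u + w) (u - w) := by
  refine funext_halves (fun j => ?_) (fun j => ?_) <;>
    simp [vecMul, dotProduct, Rmat, concat, Fin.fin_one_eq_zero j, sub_eq_add_neg]

lemma one_vecMul_Rmat_ne_zero {n : ℕ} (hn : 0 < n) : (1 : Fin n → ℝ) ᵥ* Rmat n ≠ 0 := by
  intro h
  -- Column `0` of `R` is nonnegative and `R 0 0 = 1`.
  have h0 : 0 < ((1 : Fin n → ℝ) ᵥ* Rmat n) ⟨0, hn⟩ := by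
    simp only [vecMul, dotProduct, Pi.one_apply, one_mul]
    refine lt_of_lt_of_le ?_ (Finset.single_le_sum (fun i _ => ?_) (Finset.mem_univ ⟨0, hn⟩))
    · simp [Rmat]
    · simp only [Rmat, Matrix.of_apply]
      split_ifs <;> simp_all
  simp [h] at h0

end Rmat

section BarnesWall

lemma mem_BW_succ_concat_iff {t : ℕ} {u w : Fin (2 ^ t) → ℝ} :
    concat u w ∈ BW (t + 1) ↔ u ∈ BW t ∧ w - u ∈ RBW t := by
  constructor
  · rintro ⟨u', _, hu', ⟨z, hz, rfl⟩, h⟩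
    obtain ⟨rfl, rfl⟩ := concat_inj.mp h
    exact ⟨hu', z, hz, by rw [add_sub_cancel_left]⟩
  · rintro ⟨hu, z, hz, hzw⟩
    exact ⟨u, w - u, hu, ⟨z, hz, hzw.symm⟩, by rw [add_sub_cancel]⟩

lemma zero_mem_BW : ∀ t, (0 : Fin (2 ^ t) → ℝ) ∈ BW t
  | 0 => fun _ => ⟨0, by simp⟩
  | t + 1 => by
    rw [← concat_zero]
    exact mem_BW_succ_concat_iff.mpr ⟨zero_mem_BW t, 0, zero_mem_BW t, by simp⟩

lemma sub_mem_BW : ∀ {t} {a b : Fin (2 ^ t) → ℝ}, a ∈ BW t → b ∈ BW t → a - b ∈ BW t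
  | 0, _, _, ha, hb => fun i => by
    obtain ⟨m, hm⟩ := ha i
    obtain ⟨n, hn⟩ := hb i
    exact ⟨m - n, by simp [hm, hn]⟩
  | t + 1, _, _, ⟨u, _, hu, ⟨z, hz, rfl⟩, rfl⟩, ⟨u', _, hu', ⟨z', hz', rfl⟩, rfl⟩ => by
    refine ⟨u - u', (z - z') ᵥ* Rmat (2 ^ t), sub_mem_BW hu hu',
      ⟨z - z', sub_mem_BW hz hz', rfl⟩, ?_⟩
    rw [concat_sub, sub_vecMul]
    congr 1
    abel

def bwLattice (t : ℕ) : AddSubgroup (Fin (2 ^ t) → ℝ) :=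
  AddSubgroup.ofSub (BW t) ⟨0, zero_mem_BW t⟩ fun _ ha _ hb => by
    simpa only [sub_eq_add_neg] using sub_mem_BW ha hb

def rbwLattice (t : ℕ) : AddSubgroup (Fin (2 ^ t) → ℝ) :=
  (bwLattice t).map (vecMulLinear (Rmat (2 ^ t))).toAddMonoidHom

@[simp] lemma mem_bwLattice {t : ℕ} {x : Fin (2 ^ t) → ℝ} : x ∈ bwLattice t ↔ x ∈ BW t := Iff.rfl

@[simp] lemma mem_rbwLattice {t : ℕ} {x : Fin (2 ^ t) → ℝ} : x ∈ rbwLattice t ↔ x ∈ RBW t := Iff.rfl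

lemma concat_self_mem_BW {t : ℕ} {x : Fin (2 ^ t) → ℝ} (hx : x ∈ BW t) :
    concat x x ∈ BW (t + 1) :=
  mem_BW_succ_concat_iff.mpr ⟨hx, by rw [sub_self]; exact (rbwLattice t).zero_mem⟩

lemma one_mem_BW : ∀ t, (1 : Fin (2 ^ t) → ℝ) ∈ BW t
  | 0 => fun _ => ⟨1, by simp⟩
  | t + 1 => by
    rw [show (1 : Fin (2 ^ (t + 1)) → ℝ) = concat 1 1 from funext_halves (by simp) (by simp)]
    exact concat_self_mem_BW (one_mem_BW t)

lemma RBW_zero : RBW 0 = BW 0 := by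
  change (· ᵥ* Rmat 1) '' BW 0 = BW 0
  simp [Rmat_one]

lemma RBW_subset_BW : ∀ t, RBW t ⊆ BW t
  | 0 => RBW_zero.subset
  -- `R(2)` is not block diagonal in `R(1)`: here `(u, u + z) · R(2) = (2u + z, -z)`.
  | 1 => by
    rintro _ ⟨_, ⟨u, _, hu, ⟨z, hz, rfl⟩, rfl⟩, rfl⟩
    have hz' : z ᵥ* Rmat (2 ^ 0) = z := by change z ᵥ* Rmat 1 = z; rw [Rmat_one, vecMul_one]
    beta_reduce
    rw [hz', vecMul_Rmat_two_concat]
    have huz : u + z ∈ BW 0 := (bwLattice 0).add_mem hu hz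
    refine mem_BW_succ_concat_iff.mpr ⟨(bwLattice 0).add_mem hu huz, ?_⟩
    rw [RBW_zero]
    exact (bwLattice 0).sub_mem ((bwLattice 0).sub_mem hu huz) ((bwLattice 0).add_mem hu huz)
  | t + 2 => by
    rintro _ ⟨_, ⟨u, _, hu, ⟨z, hz, rfl⟩, rfl⟩, rfl⟩
    beta_reduce
    rw [vecMul_Rmat_concat (Nat.succ_ne_zero t)]
    refine mem_BW_succ_concat_iff.mpr ⟨RBW_subset_BW _ ⟨u, hu, rfl⟩,
      z ᵥ* Rmat (2 ^ (t + 1)), RBW_subset_BW _ ⟨z, hz, rfl⟩, ?_⟩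
    rw [add_vecMul, add_sub_cancel_left]

lemma minDist_BW_succ_le (t : ℕ) : minDist (BW (t + 1)) ≤ 2 * minDist (BW t) := by
  suffices minDist (BW (t + 1)) / 2 ≤ minDist (BW t) by linarith
  refine le_minDist ⟨1, one_mem_BW t, one_ne_zero⟩ fun x hx hx₀ => ?_
  have := minDist_le_sqnorm (concat_self_mem_BW hx) (by simpa [← concat_zero, concat_inj] using hx₀)
  rw [sqnorm_concat] at this
  linarith

lemma minDist_BW_succ_le_minDist_RBW (t : ℕ) : minDist (BW (t + 1)) ≤ minDist (RBW t) := by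
  refine le_minDist ⟨_, ⟨1, one_mem_BW t, rfl⟩, one_vecMul_Rmat_ne_zero (by positivity)⟩
    fun v hv hv₀ => ?_
  have h0v : concat 0 v ∈ BW (t + 1) :=
    mem_BW_succ_concat_iff.mpr ⟨zero_mem_BW t, by simpa using hv⟩
  have := minDist_le_sqnorm h0v (by simpa [← concat_zero, concat_inj] using hv₀)
  rwa [sqnorm_concat, sqnorm_zero, zero_add] at this

end BarnesWall

/-- Correctness of the double-sided `(u,u+v)` decoder: if
`x = (x₁,x₂) ∈ BW_{2n}` satisfies `‖y − x‖² < d(BW_{2n})/4`, then (a) `x` is the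
unique point of `BW_{2n}` within squared distance `d(BW_{2n})/4` of `y`, and
(b) for some `i ∈ {1,2}`, `x_i` is the unique point `u ∈ BW_n` with
`‖y_i − u‖² < d(BW_n)/4` and `x_{3−i} − x_i` is the unique point `v ∈ RBW_n`
with `‖(y_{3−i} − x_i) − v‖² < d(RBW_n)/4`. -/
theorem bw_double_sided_decoder_correct :
    ∀ t : ℕ, 1 ≤ t → ∀ y₁ y₂ x₁ x₂ : Fin (2 ^ t) → ℝ,
      concat x₁ x₂ ∈ BW (t + 1) →
      sqnorm (concat y₁ y₂ - concat x₁ x₂) < minDist (BW (t + 1)) / 4 →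
      (∀ x' ∈ BW (t + 1),
        sqnorm (concat y₁ y₂ - x') < minDist (BW (t + 1)) / 4 →
        x' = concat x₁ x₂) ∧
      (((∀ u : Fin (2 ^ t) → ℝ,
          (u ∈ BW t ∧ sqnorm (y₁ - u) < minDist (BW t) / 4) ↔ u = x₁) ∧
        (∀ v : Fin (2 ^ t) → ℝ,
          (v ∈ RBW t ∧ sqnorm (y₂ - x₁ - v) < minDist (RBW t) / 4) ↔ v = x₂ - x₁)) ∨
       ((∀ u : Fin (2 ^ t) → ℝ,
          (u ∈ BW t ∧ sqnorm (y₂ - u) < minDist (BW t) / 4) ↔ u = x₂) ∧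
        (∀ v : Fin (2 ^ t) → ℝ,
          (v ∈ RBW t ∧ sqnorm (y₁ - x₂ - v) < minDist (RBW t) / 4) ↔ v = x₁ - x₂))) := by
  intro t _ y₁ y₂ x₁ x₂ hx hyx
  obtain ⟨hx₁, hx₂₁⟩ := mem_BW_succ_concat_iff.mp hx
  have hx₂ : x₂ ∈ BW t := by
    simpa using (bwLattice t).add_mem (RBW_subset_BW t hx₂₁) hx₁
  have hx₁₂ : x₁ - x₂ ∈ RBW t := by
    simpa using (rbwLattice t).neg_mem hx₂₁
  have hsplit : sqnorm (y₁ - x₁) + sqnorm (y₂ - x₂) < minDist (BW (t + 1)) / 4 := by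
    rwa [concat_sub, sqnorm_concat] at hyx
  have hd := minDist_BW_succ_le t
  have hdR := minDist_BW_succ_le_minDist_RBW t
  refine ⟨fun x' hx' hyx' => eq_of_sqnorm_sub_lt_minDist (bwLattice (t + 1)) hx' hx hyx' hyx, ?_⟩
  rcases lt_or_ge (sqnorm (y₁ - x₁)) (minDist (BW t) / 4) with h₁ | h₁
  · have h₂ : sqnorm (y₂ - x₁ - (x₂ - x₁)) < minDist (RBW t) / 4 := by
      rw [sub_sub_sub_cancel_right]
      linarith [sqnorm_nonneg (y₁ - x₁)]
    exact .inl ⟨mem_and_sqnorm_sub_lt_minDist_iff (bwLattice t) hx₁ h₁,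
      mem_and_sqnorm_sub_lt_minDist_iff (rbwLattice t) hx₂₁ h₂⟩
  · have h₂ : sqnorm (y₂ - x₂) < minDist (BW t) / 4 := by linarith
    have h₁' : sqnorm (y₁ - x₂ - (x₁ - x₂)) < minDist (RBW t) / 4 := by
      rw [sub_sub_sub_cancel_right]
      linarith [sqnorm_nonneg (y₂ - x₂)]
    exact .inr ⟨mem_and_sqnorm_sub_lt_minDist_iff (bwLattice t) hx₂ h₂,
      mem_and_sqnorm_sub_lt_minDist_iff (rbwLattice t) hx₁₂ h₁'⟩
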